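/- Let C be an invertible symmetric 3×3 real matrix and v ∈ ℝ³, and set j = C⁻¹ M_v. Then j² = (1/det C)·( v (Cv)ᵀ − (vᵀCv)·I₃ ), where v (Cv)ᵀ is the 3×3 matrix with (i,k) entry v_i (Cv)_k and I₃ is the identity matrix. -/

import Mathlib

/-!
The cofactor identity `(A u) × (A w) = cof(A) (u × w)`, i.e. `M_{Au} A = cof(A) M_u`, gives
`C⁻¹ M_v = (det C)⁻¹ M_{Cv} C` for symmetric `C` (where `cof C = adj C`). Hence
`j² = (det C)⁻¹ M_{Cv} C C⁻¹ M_v = (det C)⁻¹ M_{Cv} M_v`, and `a × (b × w) = (a ⬝ w) b - (a ⬝ b) w`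
evaluates the last product.
-/

open Matrix

/-- The skew-symmetric `3 × 3` matrix of the cross product with `v`:
`crossMatrix v *ᵥ w = v ×₃ w`. -/
def crossMatrix (v : Fin 3 → ℝ) : Matrix (Fin 3) (Fin 3) ℝ :=
  !![0, -v 2, v 1; v 2, 0, -v 0; -v 1, v 0, 0]

theorem crossMatrix_mul_crossMatrix (a b : Fin 3 → ℝ) :
    crossMatrix a * crossMatrix b = vecMulVec b a - (a ⬝ᵥ b) • (1 : Matrix (Fin 3) (Fin 3) ℝ) := by
  ext i k
  fin_cases i <;> fin_cases k <;>
    simp [crossMatrix, mul_apply, Fin.sum_univ_three, vecMulVec_apply, dotProduct, one_apply] <;>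
    ring

theorem crossMatrix_mulVec_mul (A : Matrix (Fin 3) (Fin 3) ℝ) (u : Fin 3 → ℝ) :
    crossMatrix (A *ᵥ u) * A = (adjugate A)ᵀ * crossMatrix u := by
  ext i k
  fin_cases i <;> fin_cases k <;>
    simp [crossMatrix, mul_apply, Fin.sum_univ_three, adjugate_fin_three, mulVec, dotProduct] <;>
    ring

theorem inv_mul_crossMatrix_of_isSymm {C : Matrix (Fin 3) (Fin 3) ℝ} (hsymm : C.IsSymm)
    (v : Fin 3 → ℝ) : C⁻¹ * crossMatrix v = C.det⁻¹ • (crossMatrix (C *ᵥ v) * C) := by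
  rw [crossMatrix_mulVec_mul, adjugate_transpose, hsymm.eq, inv_def, Ring.inverse_eq_inv',
    smul_mul]

/-- For an invertible symmetric `3 × 3` real matrix `C` and `v ∈ ℝ³`, the square of
`j = C⁻¹ M_v` is `(det C)⁻¹ • (v (Cv)ᵀ − (vᵀ C v) I₃)`. -/
theorem j_sq_eq (C : Matrix (Fin 3) (Fin 3) ℝ) (hsymm : C.IsSymm)
    (hinv : IsUnit C.det) (v : Fin 3 → ℝ) :
    (C⁻¹ * crossMatrix v) ^ 2 =
      (C.det)⁻¹ •
        (Matrix.vecMulVec v (C.mulVec v) - (v ⬝ᵥ C.mulVec v) • (1 : Matrix (Fin 3) (Fin 3) ℝ)) := by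
  calc (C⁻¹ * crossMatrix v) ^ 2
      = C.det⁻¹ • (crossMatrix (C *ᵥ v) * C) * (C⁻¹ * crossMatrix v) := by
        rw [sq, ← inv_mul_crossMatrix_of_isSymm hsymm]
    _ = C.det⁻¹ • (crossMatrix (C *ᵥ v) * crossMatrix v) := by
        rw [smul_mul, Matrix.mul_assoc, ← Matrix.mul_assoc C, mul_nonsing_inv C hinv,
          Matrix.one_mul]
    _ = _ := by rw [crossMatrix_mul_crossMatrix, dotProduct_comm]
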